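/- Let M be a finite simple graph whose associated bilinear form B on ℝ^I is positive definite (so M is of type ADE). If i₁, …, i_k is a sequence of nodes and i, j are nodes such that (σ_{i₁} ∘ ⋯ ∘ σ_{i_k})(α_i) = α_j in ℝ^I, then in the Brauer monoid BrM(M) one has r_{i₁} ⋯ r_{i_k} · e_i · r_{i_k} ⋯ r_{i₁} = e_j. -/
import Mathlib


/-- Generators of the Brauer monoid: `r i`, `e i` for nodes `i`, and `δ`, `δ⁻¹`. -/
inductive BrauerGen (I : Type) : Type
  | r : I → BrauerGen I
  | e : I → BrauerGen I
  | del : BrauerGen I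
  | delInv : BrauerGen I

/-- The defining relations of the Brauer monoid of type `G`. -/
inductive BrauerRel {I : Type} (G : SimpleGraph I) :
    FreeMonoid (BrauerGen I) → FreeMonoid (BrauerGen I) → Prop
  | del_comm (g : BrauerGen I) :
      BrauerRel G (FreeMonoid.of .del * FreeMonoid.of g) (FreeMonoid.of g * FreeMonoid.of .del)
  | delInv_comm (g : BrauerGen I) :
      BrauerRel G (FreeMonoid.of .delInv * FreeMonoid.of g)
        (FreeMonoid.of g * FreeMonoid.of .delInv)
  | del_delInv : BrauerRel G (FreeMonoid.of .del * FreeMonoid.of .delInv) 1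
  | rr (i : I) : BrauerRel G (FreeMonoid.of (.r i) * FreeMonoid.of (.r i)) 1
  | er (i : I) :
      BrauerRel G (FreeMonoid.of (.e i) * FreeMonoid.of (.r i)) (FreeMonoid.of (.e i))
  | re (i : I) :
      BrauerRel G (FreeMonoid.of (.r i) * FreeMonoid.of (.e i)) (FreeMonoid.of (.e i))
  | ee (i : I) :
      BrauerRel G (FreeMonoid.of (.e i) * FreeMonoid.of (.e i))
        (FreeMonoid.of .del * FreeMonoid.of (.e i))
  | rr_comm (i j : I) (hne : i ≠ j) (hnadj : ¬ G.Adj i j) :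
      BrauerRel G (FreeMonoid.of (.r i) * FreeMonoid.of (.r j))
        (FreeMonoid.of (.r j) * FreeMonoid.of (.r i))
  | er_comm (i j : I) (hne : i ≠ j) (hnadj : ¬ G.Adj i j) :
      BrauerRel G (FreeMonoid.of (.e i) * FreeMonoid.of (.r j))
        (FreeMonoid.of (.r j) * FreeMonoid.of (.e i))
  | ee_comm (i j : I) (hne : i ≠ j) (hnadj : ¬ G.Adj i j) :
      BrauerRel G (FreeMonoid.of (.e i) * FreeMonoid.of (.e j))
        (FreeMonoid.of (.e j) * FreeMonoid.of (.e i))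
  | braid (i j : I) (hadj : G.Adj i j) :
      BrauerRel G (FreeMonoid.of (.r i) * FreeMonoid.of (.r j) * FreeMonoid.of (.r i))
        (FreeMonoid.of (.r j) * FreeMonoid.of (.r i) * FreeMonoid.of (.r j))
  | rer (i j : I) (hadj : G.Adj i j) :
      BrauerRel G (FreeMonoid.of (.r j) * FreeMonoid.of (.e i) * FreeMonoid.of (.r j))
        (FreeMonoid.of (.r i) * FreeMonoid.of (.e j) * FreeMonoid.of (.r i))
  | rre (i j : I) (hadj : G.Adj i j) :
      BrauerRel G (FreeMonoid.of (.r j) * FreeMonoid.of (.r i) * FreeMonoid.of (.e j))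
        (FreeMonoid.of (.e i) * FreeMonoid.of (.e j))

/-- The congruence generated by the Brauer relations. -/
def brauerCon {I : Type} (G : SimpleGraph I) : Con (FreeMonoid (BrauerGen I)) :=
  conGen (BrauerRel G)

/-- The Brauer monoid of type `G`. -/
abbrev BrauerMonoid {I : Type} (G : SimpleGraph I) : Type :=
  (brauerCon G).Quotient

namespace BrauerMonoid

variable {I : Type} (G : SimpleGraph I)

/-- The generator `r i` of the Brauer monoid. -/
def R (i : I) : BrauerMonoid G := (brauerCon G).mk' (FreeMonoid.of (.r i))

/-- The generator `e i` of the Brauer monoid. -/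
def E (i : I) : BrauerMonoid G := (brauerCon G).mk' (FreeMonoid.of (.e i))

/-- The generator `δ` of the Brauer monoid. -/
def Delta : BrauerMonoid G := (brauerCon G).mk' (FreeMonoid.of .del)

/-- The generator `δ⁻¹` of the Brauer monoid. -/
def DeltaInv : BrauerMonoid G := (brauerCon G).mk' (FreeMonoid.of .delInv)

end BrauerMonoid

section Geometric

open Classical in
/-- The Gram matrix of the bilinear form of the geometric representation:
`B(α_i, α_i) = 2`, `B(α_i, α_j) = −1` if `i ∼ j`, and `B(α_i, α_j) = 0` otherwise. -/
noncomputable def cartanEntry {I : Type} (G : SimpleGraph I) (i j : I) : ℝ :=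
  if i = j then 2 else if G.Adj i j then -1 else 0

/-- The symmetric bilinear form `B` of the geometric representation on `ℝ^I`. -/
noncomputable def cartanForm {I : Type} [Fintype I] (G : SimpleGraph I)
    (v w : I → ℝ) : ℝ :=
  ∑ i, ∑ j, v i * cartanEntry G i j * w j

open Classical in
/-- The standard basis vector `α_i` of `ℝ^I`. -/
noncomputable def simpleRoot {I : Type} (i : I) : I → ℝ := Pi.single i 1

/-- The reflection `σ_i : ℝ^I → ℝ^I`, `σ_i(v) = v − B(α_i, v) α_i`. -/
noncomputable def simpleReflection {I : Type} [Fintype I] (G : SimpleGraph I) (i : I)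
    (v : I → ℝ) : I → ℝ :=
  v - cartanForm G (simpleRoot i) v • simpleRoot i

end Geometric

namespace BrauerProof

open Finset

variable {I : Type} [Fintype I] (G : SimpleGraph I)

lemma simpleRoot_self (i : I) : simpleRoot i i = 1 := by
  classical
  simp [simpleRoot]

lemma simpleRoot_ne {i k : I} (h : k ≠ i) : simpleRoot i k = 0 := by
  classical
  simp [simpleRoot, Pi.single_apply, h]

lemma cartanEntry_self (i : I) : cartanEntry G i i = 2 := by simp [cartanEntry]

lemma cartanEntry_symm (i j : I) : cartanEntry G i j = cartanEntry G j i := by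
  classical
  unfold cartanEntry
  by_cases h : i = j
  · subst h; simp
  · simp only [h, Ne.symm h, if_false, G.adj_comm i j]

lemma cartanForm_symm (v w : I → ℝ) : cartanForm G v w = cartanForm G w v := by
  unfold cartanForm
  rw [Finset.sum_comm]
  refine Finset.sum_congr rfl fun i _ => Finset.sum_congr rfl fun j _ => ?_
  rw [cartanEntry_symm]; ring

lemma cartanForm_add_right (v w x : I → ℝ) :
    cartanForm G v (w + x) = cartanForm G v w + cartanForm G v x := by
  simp only [cartanForm, Pi.add_apply, mul_add, Finset.sum_add_distrib]

lemma cartanForm_smul_right (c : ℝ) (v w : I → ℝ) :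
    cartanForm G v (c • w) = c * cartanForm G v w := by
  unfold cartanForm
  rw [Finset.mul_sum]
  refine Finset.sum_congr rfl fun i _ => ?_
  rw [Finset.mul_sum]
  refine Finset.sum_congr rfl fun j _ => ?_
  simp only [Pi.smul_apply, smul_eq_mul]; ring

lemma cartanForm_sub_right (v w x : I → ℝ) :
    cartanForm G v (w - x) = cartanForm G v w - cartanForm G v x := by
  have h := cartanForm_add_right G v (w - x) x
  simp only [sub_add_cancel] at h
  linarith

lemma cartanForm_add_left (v w x : I → ℝ) :
    cartanForm G (v + w) x = cartanForm G v x + cartanForm G w x := by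
  rw [cartanForm_symm, cartanForm_add_right, cartanForm_symm G x v, cartanForm_symm G x w]

lemma cartanForm_smul_left (c : ℝ) (v w : I → ℝ) :
    cartanForm G (c • v) w = c * cartanForm G v w := by
  rw [cartanForm_symm, cartanForm_smul_right, cartanForm_symm]

lemma cartanForm_sub_left (v w x : I → ℝ) :
    cartanForm G (v - w) x = cartanForm G v x - cartanForm G w x := by
  rw [cartanForm_symm, cartanForm_sub_right, cartanForm_symm G x v, cartanForm_symm G x w]

lemma cartanForm_simpleRoot_left (u : I) (p : I → ℝ) :
    cartanForm G (simpleRoot u) p = ∑ j, cartanEntry G u j * p j := by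
  unfold cartanForm
  rw [Finset.sum_eq_single u]
  · refine Finset.sum_congr rfl fun j _ => ?_
    rw [simpleRoot_self, one_mul]
  · intro b _ hb
    apply Finset.sum_eq_zero
    intro j _
    rw [simpleRoot_ne hb, zero_mul, zero_mul]
  · intro h; exact absurd (Finset.mem_univ u) h

lemma cartanForm_simpleRoot_simpleRoot (u j : I) :
    cartanForm G (simpleRoot u) (simpleRoot j) = cartanEntry G u j := by
  rw [cartanForm_simpleRoot_left, Finset.sum_eq_single j]
  · rw [simpleRoot_self, mul_one]
  · intro b _ hb; rw [simpleRoot_ne hb, mul_zero]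
  · intro h; exact absurd (Finset.mem_univ j) h

lemma cartanForm_root_self (i : I) :
    cartanForm G (simpleRoot i) (simpleRoot i) = 2 := by
  rw [cartanForm_simpleRoot_simpleRoot, cartanEntry_self]

lemma sigma_def (u : I) (v : I → ℝ) :
    simpleReflection G u v = v - cartanForm G (simpleRoot u) v • simpleRoot u := rfl

lemma sigma_apply (u : I) (v : I → ℝ) (k : I) :
    simpleReflection G u v k = v k - cartanForm G (simpleRoot u) v * simpleRoot u k := rfl

lemma cartanForm_sigma_left (u : I) (v : I → ℝ) :
    cartanForm G (simpleRoot u) (simpleReflection G u v) =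
      - cartanForm G (simpleRoot u) v := by
  rw [sigma_def, cartanForm_sub_right, cartanForm_smul_right, cartanForm_root_self]
  ring

lemma sigma_invariant (u : I) (v w : I → ℝ) :
    cartanForm G (simpleReflection G u v) (simpleReflection G u w) = cartanForm G v w := by
  rw [sigma_def, sigma_def, cartanForm_sub_left, cartanForm_sub_right, cartanForm_sub_right,
    cartanForm_smul_left, cartanForm_smul_right, cartanForm_smul_left, cartanForm_smul_right,
    cartanForm_root_self, cartanForm_symm G v (simpleRoot u)]
  ring

lemma sigma_invol (u : I) (v : I → ℝ) :
    simpleReflection G u (simpleReflection G u v) = v := by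
  rw [sigma_def G u (simpleReflection G u v), cartanForm_sigma_left, sigma_def]
  ext k
  simp only [Pi.sub_apply, Pi.smul_apply, smul_eq_mul, neg_mul]
  ring

lemma sigma_add (u : I) (v w : I → ℝ) :
    simpleReflection G u (v + w) = simpleReflection G u v + simpleReflection G u w := by
  ext k
  simp only [sigma_apply, Pi.add_apply, cartanForm_add_right]
  ring

lemma sigma_smul (u : I) (c : ℝ) (v : I → ℝ) :
    simpleReflection G u (c • v) = c • simpleReflection G u v := by
  ext k
  simp only [sigma_apply, Pi.smul_apply, smul_eq_mul, cartanForm_smul_right]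
  ring

lemma sigma_root_self (i : I) : simpleReflection G i (simpleRoot i) = - simpleRoot i := by
  rw [sigma_def, cartanForm_root_self]
  ext k
  simp only [Pi.sub_apply, Pi.smul_apply, smul_eq_mul, Pi.neg_apply]
  ring

lemma sigma_root_nonadj (s i : I) (hne : s ≠ i) (hnadj : ¬ G.Adj s i) :
    simpleReflection G s (simpleRoot i) = simpleRoot i := by
  rw [sigma_def, cartanForm_simpleRoot_simpleRoot]
  have : cartanEntry G s i = 0 := by simp [cartanEntry, hne, hnadj]
  rw [this]
  simp

lemma sigma_root_adj (s i : I) (hadj : G.Adj s i) :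
    simpleReflection G s (simpleRoot i) = simpleRoot i + simpleRoot s := by
  rw [sigma_def, cartanForm_simpleRoot_simpleRoot]
  have : cartanEntry G s i = -1 := by simp [cartanEntry, hadj.ne, hadj]
  rw [this]
  ext k
  simp only [Pi.sub_apply, Pi.smul_apply, smul_eq_mul, Pi.add_apply]
  ring

end BrauerProof

namespace BrauerProof

open Finset

variable {I : Type} [Fintype I] (G : SimpleGraph I)

/-- Composite action of a word. -/
noncomputable def wAct (l : List I) : (I → ℝ) → (I → ℝ) :=
  (l.map (simpleReflection G)).foldr (· ∘ ·) id

lemma wAct_nil (v : I → ℝ) : wAct G [] v = v := rfl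

lemma wAct_cons (a : I) (l : List I) (v : I → ℝ) :
    wAct G (a :: l) v = simpleReflection G a (wAct G l v) := rfl

lemma wAct_append (l m : List I) (v : I → ℝ) :
    wAct G (l ++ m) v = wAct G l (wAct G m v) := by
  induction l with
  | nil => rfl
  | cons a l ih => rw [List.cons_append, wAct_cons, wAct_cons, ih]

lemma wAct_singleton (s : I) (v : I → ℝ) : wAct G [s] v = simpleReflection G s v := rfl

lemma wAct_add (l : List I) (v w : I → ℝ) :
    wAct G l (v + w) = wAct G l v + wAct G l w := by
  induction l with
  | nil => rfl
  | cons a l ih => rw [wAct_cons, wAct_cons, wAct_cons, ih, sigma_add]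

lemma wAct_smul (l : List I) (c : ℝ) (v : I → ℝ) :
    wAct G l (c • v) = c • wAct G l v := by
  induction l with
  | nil => rfl
  | cons a l ih => rw [wAct_cons, wAct_cons, ih, sigma_smul]

lemma wAct_neg (l : List I) (v : I → ℝ) : wAct G l (-v) = - wAct G l v := by
  have h := wAct_smul G l (-1) v
  simpa using h

lemma wAct_invariant (l : List I) (v w : I → ℝ) :
    cartanForm G (wAct G l v) (wAct G l w) = cartanForm G v w := by
  induction l with
  | nil => rfl
  | cons a l ih => rw [wAct_cons, wAct_cons, sigma_invariant, ih]

lemma wAct_root_norm (l : List I) (i : I) :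
    cartanForm G (wAct G l (simpleRoot i)) (wAct G l (simpleRoot i)) = 2 := by
  rw [wAct_invariant, cartanForm_root_self]

/-- Conjugation identity: if `w_b(α_s) = α_t` then `w_b ∘ σ_s = σ_t ∘ w_b`. -/
lemma wAct_sigma_conj (b : List I) (s t : I) (hb : wAct G b (simpleRoot s) = simpleRoot t)
    (v : I → ℝ) : wAct G b (simpleReflection G s v) = simpleReflection G t (wAct G b v) := by
  rw [sigma_def, sub_eq_add_neg, ← neg_smul, wAct_add, wAct_smul, hb, sigma_def]
  have : cartanForm G (simpleRoot t) (wAct G b v) = cartanForm G (simpleRoot s) v := by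
    rw [← hb, wAct_invariant]
  rw [this, sub_eq_add_neg, ← neg_smul]

/-- Integer vectors. -/
def IsIntVec (v : I → ℝ) : Prop := ∀ k, ∃ m : ℤ, v k = (m : ℝ)

lemma isIntVec_simpleRoot (i : I) : IsIntVec (simpleRoot i) := by
  classical
  intro k
  by_cases h : k = i
  · exact ⟨1, by subst h; rw [simpleRoot_self]; norm_num⟩
  · exact ⟨0, by rw [simpleRoot_ne h]; norm_num⟩

lemma cartanEntry_int (u j : I) : ∃ m : ℤ, cartanEntry G u j = (m : ℝ) := by
  classical
  unfold cartanEntry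
  split_ifs
  · exact ⟨2, by norm_num⟩
  · exact ⟨-1, by norm_num⟩
  · exact ⟨0, by norm_num⟩

lemma cartanForm_simpleRoot_int (u : I) (p : I → ℝ) (h : IsIntVec p) :
    ∃ m : ℤ, cartanForm G (simpleRoot u) p = (m : ℝ) := by
  classical
  rw [cartanForm_simpleRoot_left]
  refine ⟨∑ j, (cartanEntry_int G u j).choose * (h j).choose, ?_⟩
  rw [Int.cast_sum]
  refine Finset.sum_congr rfl fun j _ => ?_
  rw [Int.cast_mul, ← (cartanEntry_int G u j).choose_spec, ← (h j).choose_spec]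

lemma isIntVec_sigma (u : I) (p : I → ℝ) (h : IsIntVec p) :
    IsIntVec (simpleReflection G u p) := by
  intro k
  obtain ⟨c, hc⟩ := cartanForm_simpleRoot_int G u p h
  obtain ⟨m, hm⟩ := h k
  obtain ⟨a, ha⟩ := isIntVec_simpleRoot u k
  exact ⟨m - c * a, by rw [sigma_apply, hc, hm, ha]; push_cast; ring⟩

lemma isIntVec_wAct (l : List I) (p : I → ℝ) (h : IsIntVec p) : IsIntVec (wAct G l p) := by
  induction l with
  | nil => exact h
  | cons a l ih => rw [wAct_cons]; exact isIntVec_sigma G a _ ih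

end BrauerProof

namespace BrauerProof

open Finset

variable {I : Type} [Fintype I] (G : SimpleGraph I)

lemma cartanForm_zero : cartanForm G 0 0 = 0 := by
  simp [cartanForm]

lemma key_geometric (hpos : ∀ v : I → ℝ, v ≠ 0 → 0 < cartanForm G v v) (u : I) (p : I → ℝ)
    (hnn : ∀ k, 0 ≤ p k) (hint : IsIntVec p) (hnorm : cartanForm G p p = 2)
    (hneg : simpleReflection G u p u < 0) : p = simpleRoot u := by
  classical
  set c := cartanForm G (simpleRoot u) p with hc
  have h1 : p u < c := by
    rw [sigma_apply, simpleRoot_self, mul_one, ← hc] at hneg; linarith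
  have h2 : c ≤ 2 * p u := by
    rw [hc, cartanForm_simpleRoot_left]
    have hsplit : ∑ j, cartanEntry G u j * p j =
        cartanEntry G u u * p u + ∑ j ∈ univ.erase u, cartanEntry G u j * p j :=
      (Finset.add_sum_erase _ _ (mem_univ u)).symm
    rw [hsplit, cartanEntry_self]
    have h3 : ∑ j ∈ univ.erase u, cartanEntry G u j * p j ≤ 0 := by
      refine Finset.sum_nonpos fun j hj => ?_
      have hji : j ≠ u := (Finset.mem_erase.1 hj).1
      have hle : cartanEntry G u j ≤ 0 := by
        unfold cartanEntry
        split_ifs with ha hb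
        · exact absurd ha.symm hji
        · norm_num
        · exact le_refl 0
      exact mul_nonpos_of_nonpos_of_nonneg hle (hnn j)
    linarith
  have hq : cartanForm G (p - (c/2) • simpleRoot u) (p - (c/2) • simpleRoot u)
      = 2 - c^2/2 := by
    rw [cartanForm_sub_left, cartanForm_sub_right, cartanForm_sub_right,
      cartanForm_smul_left, cartanForm_smul_right, cartanForm_smul_left, cartanForm_smul_right,
      cartanForm_root_self, hnorm, cartanForm_symm G p (simpleRoot u), ← hc]
    ring
  have hq0 : 0 ≤ 2 - c^2/2 := by
    rcases eq_or_ne (p - (c/2) • simpleRoot u) 0 with h0 | h0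
    · rw [← hq, h0, cartanForm_zero]
    · have := hpos _ h0; linarith [hq ▸ this]
  obtain ⟨m, hm⟩ := cartanForm_simpleRoot_int G u p hint
  obtain ⟨mp, hmp⟩ := hint u
  have hceq : c = (m : ℝ) := by rw [hc, hm]
  have hm2 : (m : ℝ) ≤ 2 := by nlinarith [hq0, hceq]
  have hintm : m = 2 := by
    have i1 : (mp : ℝ) < m := by rw [← hmp, ← hceq]; exact h1
    have i2 : (m : ℝ) ≤ 2 * mp := by rw [← hceq, ← hmp]; exact h2
    have i3 : (0 : ℝ) ≤ mp := by rw [← hmp]; exact hnn u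
    have i1' : mp < m := by exact_mod_cast i1
    have i2' : m ≤ 2 * mp := by exact_mod_cast i2
    have i3' : 0 ≤ mp := by exact_mod_cast i3
    have i4' : m ≤ 2 := by exact_mod_cast hm2
    omega
  have hc2 : c = 2 := by rw [hceq, hintm]; norm_num
  have hq00 : cartanForm G (p - (c/2) • simpleRoot u) (p - (c/2) • simpleRoot u) = 0 := by
    rw [hq, hc2]; norm_num
  have hzero : p - (c/2) • simpleRoot u = 0 := by
    by_contra h0
    exact absurd hq00 (ne_of_gt (hpos _ h0))
  have : p = (c/2) • simpleRoot u := by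
    have := sub_eq_zero.1 hzero; exact this
  rw [this, hc2]
  norm_num

lemma sigma_apply_ne (u : I) (p : I → ℝ) (k : I) (h : k ≠ u) :
    simpleReflection G u p k = p k := by
  rw [sigma_apply, simpleRoot_ne h, mul_zero, sub_zero]

lemma signFlip (hpos : ∀ v : I → ℝ, v ≠ 0 → 0 < cartanForm G v v) :
    ∀ (c : List I) (s : I), (∃ k, wAct G c (simpleRoot s) k < 0) →
    ∃ a t b, c = a ++ t :: b ∧ wAct G b (simpleRoot s) = simpleRoot t := by
  intro c
  induction c with
  | nil =>
    intro s ⟨k, hk⟩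
    rw [wAct_nil] at hk
    rcases eq_or_ne k s with rfl | hne
    · rw [simpleRoot_self] at hk; norm_num at hk
    · rw [simpleRoot_ne hne] at hk; norm_num at hk
  | cons u c' ih =>
    intro s ⟨k, hk⟩
    by_cases hneg : ∃ k, wAct G c' (simpleRoot s) k < 0
    · obtain ⟨a, t, b, heq, hb⟩ := ih s hneg
      exact ⟨u :: a, t, b, by rw [heq]; rfl, hb⟩
    · push_neg at hneg
      rw [wAct_cons] at hk
      have hku : k = u := by
        by_contra hne
        rw [sigma_apply_ne G u _ k hne] at hk
        exact absurd hk (not_lt.2 (hneg k))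
      subst hku
      have hpu : wAct G c' (simpleRoot s) = simpleRoot k :=
        key_geometric G hpos k _ hneg (isIntVec_wAct G c' _ (isIntVec_simpleRoot s))
          (wAct_root_norm G c' s) hk
      exact ⟨[], k, c', rfl, hpu⟩

/-- Not both summands of `ε • α_j` can be nonnegative. -/
lemma exists_neg_coord (β γ : I → ℝ) (hβ : cartanForm G β β = 2) (hγ : cartanForm G γ γ = 2)
    (j : I) (ε : ℝ) (hε : ε = 1 ∨ ε = -1) (hsum : β + γ = ε • simpleRoot j) :
    (∃ k, β k < 0) ∨ (∃ k, γ k < 0) := by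
  by_contra h
  push_neg at h
  obtain ⟨h1, h2⟩ := h
  -- ε = 1
  have hj : β j + γ j = ε := by
    have := congrFun hsum j
    rw [Pi.add_apply, Pi.smul_apply, simpleRoot_self, smul_eq_mul, mul_one] at this
    exact this
  have hε1 : ε = 1 := by
    rcases hε with h | h
    · exact h
    · exfalso; rw [h] at hj; linarith [h1 j, h2 j]
  -- off coordinates vanish
  have hoff : ∀ k, k ≠ j → β k = 0 ∧ γ k = 0 := by
    intro k hk
    have := congrFun hsum k
    rw [Pi.add_apply, Pi.smul_apply, simpleRoot_ne hk, smul_eq_mul, mul_zero] at this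
    constructor <;> linarith [h1 k, h2 k]
  have hβj : β = β j • simpleRoot j := by
    ext k
    rcases eq_or_ne k j with rfl | hk
    · rw [Pi.smul_apply, simpleRoot_self, smul_eq_mul, mul_one]
    · rw [(hoff k hk).1, Pi.smul_apply, simpleRoot_ne hk, smul_eq_mul, mul_zero]
  have hnormβ : β j * β j * 2 = 2 := by
    have := hβ
    rw [hβj, cartanForm_smul_left, cartanForm_smul_right, cartanForm_root_self] at this
    linarith
  have hβj1 : β j = 1 := by nlinarith [h1 j]
  have hγj : γ j = 0 := by rw [hε1] at hj; linarith
  have hγ0 : γ = 0 := by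
    ext k
    rcases eq_or_ne k j with rfl | hk
    · exact hγj
    · exact (hoff k hk).2
  rw [hγ0, cartanForm_zero] at hγ
  norm_num at hγ

end BrauerProof

namespace BrauerProof

open BrauerMonoid

variable {I : Type} (G : SimpleGraph I)

lemma brel {x y : FreeMonoid (BrauerGen I)} (h : BrauerRel G x y) :
    ((brauerCon G).mk' x : BrauerMonoid G) = (brauerCon G).mk' y := by
  rw [Con.coe_mk']
  exact (Con.eq _).2 (ConGen.Rel.of _ _ h)

lemma R_mul_R (i : I) : R G i * R G i = 1 := by
  rw [show (1 : BrauerMonoid G) = (brauerCon G).mk' 1 from (map_one _).symm]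
  simp only [R, ← map_mul]
  exact brel G (BrauerRel.rr i)

lemma E_mul_R (i : I) : E G i * R G i = E G i := by
  simp only [E, R, ← map_mul]; exact brel G (BrauerRel.er i)

lemma R_mul_E (i : I) : R G i * E G i = E G i := by
  simp only [E, R, ← map_mul]; exact brel G (BrauerRel.re i)

lemma R_comm (s i : I) (hne : s ≠ i) (hnadj : ¬ G.Adj s i) :
    R G s * R G i = R G i * R G s := by
  simp only [R, ← map_mul]; exact brel G (BrauerRel.rr_comm s i hne hnadj)

lemma E_R_comm (i s : I) (hne : i ≠ s) (hnadj : ¬ G.Adj i s) :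
    E G i * R G s = R G s * E G i := by
  simp only [E, R, ← map_mul]; exact brel G (BrauerRel.er_comm i s hne hnadj)

lemma R_braid (i s : I) (hadj : G.Adj i s) :
    R G i * R G s * R G i = R G s * R G i * R G s := by
  simp only [R, ← map_mul]; exact brel G (BrauerRel.braid i s hadj)

lemma R_E_R (i s : I) (hadj : G.Adj i s) :
    R G s * E G i * R G s = R G i * E G s * R G i := by
  simp only [E, R, ← map_mul]; exact brel G (BrauerRel.rer i s hadj)

/-- The continuation-form hypotheses on a family `F` (satisfied by both `R` and `E`). -/
structure GoodFamily (F : I → BrauerMonoid G) : Prop where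
  h1 : ∀ (i : I) (x : BrauerMonoid G), R G i * (F i * (R G i * x)) = F i * x
  h2 : ∀ (s i : I), s ≠ i → ¬ G.Adj s i →
    ∀ x : BrauerMonoid G, R G s * (F i * (R G s * x)) = F i * x
  h3 : ∀ (s i : I), G.Adj s i →
    ∀ x : BrauerMonoid G, R G i * (R G s * (F i * (R G s * (R G i * x)))) = F s * x

lemma goodFamily_R : GoodFamily G (R G) where
  h1 i x := by
    rw [← mul_assoc, R_mul_R, one_mul]
  h2 s i hne hnadj x := by
    rw [← mul_assoc, R_comm G s i hne hnadj, mul_assoc, ← mul_assoc (R G s), R_mul_R, one_mul]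
  h3 s i hadj x := by
    calc R G i * (R G s * (R G i * (R G s * (R G i * x))))
        = (R G i * R G s * R G i) * (R G s * (R G i * x)) := by simp only [mul_assoc]
      _ = (R G s * R G i * R G s) * (R G s * (R G i * x)) := by rw [R_braid G i s hadj.symm]
      _ = R G s * (R G i * ((R G s * R G s) * (R G i * x))) := by simp only [mul_assoc]
      _ = R G s * x := by
          rw [R_mul_R G s, one_mul, ← mul_assoc (R G i), R_mul_R, one_mul]

lemma goodFamily_E : GoodFamily G (E G) where
  h1 i x := by
    rw [← mul_assoc, R_mul_E, ← mul_assoc, E_mul_R]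
  h2 s i hne hnadj x := by
    have hcomm : E G i * R G s = R G s * E G i :=
      E_R_comm G i s hne.symm (fun h => hnadj h.symm)
    calc R G s * (E G i * (R G s * x))
        = (R G s * E G i) * (R G s * x) := by rw [← mul_assoc]
      _ = (E G i * R G s) * (R G s * x) := by rw [hcomm]
      _ = E G i * ((R G s * R G s) * x) := by simp only [mul_assoc]
      _ = E G i * x := by rw [R_mul_R, one_mul]
  h3 s i hadj x := by
    calc R G i * (R G s * (E G i * (R G s * (R G i * x))))
        = R G i * ((R G s * E G i * R G s) * (R G i * x)) := by simp only [mul_assoc]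
      _ = R G i * ((R G i * E G s * R G i) * (R G i * x)) := by rw [R_E_R G i s hadj.symm]
      _ = (R G i * R G i) * (E G s * ((R G i * R G i) * x)) := by simp only [mul_assoc]
      _ = E G s * x := by rw [R_mul_R, one_mul, one_mul]

/-- Product of the `R` generators along a word. -/
def P (l : List I) : BrauerMonoid G := (l.map (R G)).prod

lemma P_nil : P G ([] : List I) = 1 := rfl

lemma P_cons (a : I) (l : List I) : P G (a :: l) = R G a * P G l := by
  simp [P]

lemma P_append (l m : List I) : P G (l ++ m) = P G l * P G m := by
  simp [P]

lemma P_singleton (a : I) : P G [a] = R G a := by simp [P]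

lemma P_rev_cancel (l : List I) (x : BrauerMonoid G) :
    P G l.reverse * (P G l * x) = x := by
  induction l generalizing x with
  | nil => simp [P_nil]
  | cons a l ih =>
    rw [List.reverse_cons, P_append, P_singleton, P_cons]
    calc P G l.reverse * R G a * (R G a * P G l * x)
        = P G l.reverse * ((R G a * R G a) * (P G l * x)) := by simp only [mul_assoc]
      _ = x := by rw [R_mul_R, one_mul, ih]

end BrauerProof

namespace BrauerProof

open BrauerMonoid

variable {I : Type} [Fintype I] (G : SimpleGraph I)

lemma root_eq_root {i j : I} {ε : ℝ} (hε : ε = 1 ∨ ε = -1)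
    (h : simpleRoot i = ε • simpleRoot (I := I) j) : i = j := by
  by_contra hne
  have h1 := congrFun h i
  rw [simpleRoot_self, Pi.smul_apply, simpleRoot_ne hne, smul_eq_mul, mul_zero] at h1
  norm_num at h1

lemma RR_cancel (s : I) (x : BrauerMonoid G) : R G s * (R G s * x) = x := by
  rw [← mul_assoc, R_mul_R, one_mul]

lemma collapse_geo (a b : List I) (t i : I) (hb : wAct G b (simpleRoot i) = simpleRoot t)
    (x : I → ℝ) :
    wAct G (a ++ t :: b) (simpleReflection G i x) = wAct G (a ++ b) x := by
  rw [wAct_append, wAct_cons, wAct_sigma_conj G b i t hb x, sigma_invol, ← wAct_append]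

lemma P_concat_reverse (a b : List I) (t : I) :
    P G (a ++ t :: b).reverse = P G b.reverse * (R G t * P G a.reverse) := by
  rw [List.reverse_append, List.reverse_cons, List.append_assoc, P_append, P_append,
    P_singleton]

lemma P_mid (a b : List I) (t : I) :
    P G (a ++ t :: b) = P G a * (R G t * P G b) := by
  rw [P_append, P_cons]

lemma collapse_mon (F : I → BrauerMonoid G) (hF : GoodFamily G F) (a b : List I)
    (t s i : I) (hadj : G.Adj s i)
    (hRt : P G b * R G i * P G b.reverse = R G t) :
    P G (a ++ t :: b) * (R G s * (F i * (R G s * P G (a ++ t :: b).reverse))) =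
      P G (a ++ b) * (F s * P G (a ++ b).reverse) := by
  have hRt' : P G b * (R G i * P G b.reverse) = R G t := by rw [← mul_assoc]; exact hRt
  rw [P_mid, P_concat_reverse, ← hRt']
  calc P G a * (P G b * (R G i * P G b.reverse) * P G b) *
        (R G s * (F i * (R G s * (P G b.reverse *
          (P G b * (R G i * P G b.reverse) * P G a.reverse)))))
      = P G a * (P G b * (R G i * (P G b.reverse * (P G b *
          (R G s * (F i * (R G s * (P G b.reverse * (P G b *
            (R G i * (P G b.reverse * P G a.reverse))))))))))) := by simp only [mul_assoc]
    _ = P G a * (P G b * (R G i * (R G s * (F i * (R G s *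
          (R G i * (P G b.reverse * P G a.reverse))))))) := by
        rw [P_rev_cancel, P_rev_cancel]
    _ = P G a * (P G b * (F s * (P G b.reverse * P G a.reverse))) := by
        rw [hF.h3 s i hadj]
    _ = P G (a ++ b) * (F s * P G (a ++ b).reverse) := by
        rw [P_append, List.reverse_append, P_append]
        simp only [mul_assoc]

lemma collapse_mon2 (F : I → BrauerMonoid G) (a b : List I) (t s : I) (i : I)
    (hRt : P G b * R G s * P G b.reverse = R G t) :
    P G (a ++ t :: b) * (R G s * (F i * (R G s * P G (a ++ t :: b).reverse))) =
      P G (a ++ b) * (F i * P G (a ++ b).reverse) := by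
  have hRt' : P G b * (R G s * P G b.reverse) = R G t := by rw [← mul_assoc]; exact hRt
  rw [P_mid, P_concat_reverse, ← hRt']
  calc P G a * (P G b * (R G s * P G b.reverse) * P G b) *
        (R G s * (F i * (R G s * (P G b.reverse *
          (P G b * (R G s * P G b.reverse) * P G a.reverse)))))
      = P G a * (P G b * (R G s * (P G b.reverse * (P G b *
          (R G s * (F i * (R G s * (P G b.reverse * (P G b *
            (R G s * (P G b.reverse * P G a.reverse))))))))))) := by simp only [mul_assoc]
    _ = P G a * (P G b * (R G s * (R G s * (F i * (R G s *
          (R G s * (P G b.reverse * P G a.reverse))))))) := by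
        rw [P_rev_cancel, P_rev_cancel]
    _ = P G a * (P G b * (F i * (P G b.reverse * P G a.reverse))) := by
        rw [RR_cancel, RR_cancel]
    _ = P G (a ++ b) * (F i * P G (a ++ b).reverse) := by
        rw [P_append, List.reverse_append, P_append]
        simp only [mul_assoc]

lemma main_lemma (hpos : ∀ v : I → ℝ, v ≠ 0 → 0 < cartanForm G v v) :
    ∀ (n : ℕ) (l : List I), l.length ≤ n → ∀ (F : I → BrauerMonoid G), GoodFamily G F →
    ∀ (i j : I) (ε : ℝ), (ε = 1 ∨ ε = -1) →
    wAct G l (simpleRoot i) = ε • simpleRoot j →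
    P G l * F i * P G l.reverse = F j := by
  intro n
  induction n with
  | zero =>
    intro l hl F hF i j ε hε hw
    obtain rfl : l = [] := List.eq_nil_of_length_eq_zero (Nat.le_zero.1 hl)
    rw [wAct_nil] at hw
    obtain rfl : i = j := root_eq_root hε hw
    simp [P_nil]
  | succ n ih =>
    intro l hl F hF i j ε hε hw
    rcases List.eq_nil_or_concat l with rfl | ⟨l', s, rfl⟩
    · rw [wAct_nil] at hw
      obtain rfl : i = j := root_eq_root hε hw
      simp [P_nil]
    · rw [List.concat_eq_append] at hl hw ⊢
      have hl' : l'.length ≤ n := by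
        rw [List.length_append, List.length_singleton] at hl; omega
      have hw' : wAct G l' (simpleReflection G s (simpleRoot i)) = ε • simpleRoot j := by
        rw [← wAct_singleton, ← wAct_append]; exact hw
      -- rewrite the goal into continuation form
      have hgoal : P G (l' ++ [s]) * F i * P G (l' ++ [s]).reverse =
          P G l' * (R G s * (F i * (R G s * P G l'.reverse))) := by
        rw [P_append, P_singleton, List.reverse_append, List.reverse_singleton,
          P_append, P_singleton]
        simp only [mul_assoc]
      rw [hgoal]
      rcases eq_or_ne s i with rfl | hsi
      · -- s = i
        rw [sigma_root_self, wAct_neg] at hw'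
        have hgeo : wAct G l' (simpleRoot s) = (-ε) • simpleRoot j := by
          rw [neg_smul, ← hw', neg_neg]
        have hih := ih l' hl' F hF s j (-ε)
          (by rcases hε with h | h
              · right; rw [h]
              · left; rw [h]; norm_num) hgeo
        rw [hF.h1, ← mul_assoc]
        exact hih
      · by_cases hadj : G.Adj s i
        · -- adjacent case
          have hw'' := hw'
          rw [sigma_root_adj G s i hadj, wAct_add] at hw'
          rcases exists_neg_coord G _ _ (wAct_root_norm G l' i) (wAct_root_norm G l' s)
            j ε hε hw' with hneg | hneg
          · -- β = wAct l' (α i) has a negative coordinate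
            obtain ⟨a, t, b, heq, hb⟩ := signFlip G hpos l' i hneg
            subst heq
            have hlb : b.length ≤ n := by
              rw [List.length_append, List.length_cons] at hl'; omega
            have hlab : (a ++ b).length ≤ n := by
              rw [List.length_append] at hl' ⊢
              rw [List.length_cons] at hl'; omega
            have hRt := ih b hlb (R G) (goodFamily_R G) i t 1 (Or.inl rfl)
              (by rw [hb, one_smul])
            rw [collapse_mon G F hF a b t s i hadj hRt]
            have hgeo : wAct G (a ++ b) (simpleRoot s) = ε • simpleRoot j := by
              rw [← collapse_geo G a b t i hb (simpleRoot s), sigma_root_adj G i s hadj.symm,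
                wAct_add, add_comm]
              exact hw'
            have hih := ih (a ++ b) hlab F hF s j ε hε hgeo
            rw [← mul_assoc]
            exact hih
          · -- γ = wAct l' (α s) has a negative coordinate
            obtain ⟨a, t, b, heq, hb⟩ := signFlip G hpos l' s hneg
            subst heq
            have hlb : b.length ≤ n := by
              rw [List.length_append, List.length_cons] at hl'; omega
            have hlab : (a ++ b).length ≤ n := by
              rw [List.length_append] at hl' ⊢
              rw [List.length_cons] at hl'; omega
            have hRt := ih b hlb (R G) (goodFamily_R G) s t 1 (Or.inl rfl)
              (by rw [hb, one_smul])
            rw [collapse_mon2 G F a b t s i hRt]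
            have hgeo : wAct G (a ++ b) (simpleRoot i) = ε • simpleRoot j := by
              rw [← collapse_geo G a b t s hb (simpleRoot i)]
              exact hw''
            have hih := ih (a ++ b) hlab F hF i j ε hε hgeo
            rw [← mul_assoc]
            exact hih
        · -- non-adjacent
          rw [sigma_root_nonadj G s i hsi hadj] at hw'
          have hih := ih l' hl' F hF i j ε hε hw'
          rw [hF.h2 s i hsi hadj, ← mul_assoc]
          exact hih

end BrauerProof


open BrauerMonoid in
/-- If the bilinear form of the geometric representation of `M` is positive definite
(so `M` is of type ADE) and `w = σ_{i₁} ∘ ⋯ ∘ σ_{i_k}` maps `α_i` to `α_j`, then in the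
Brauer monoid `BrM(M)` one has `r_{i₁} ⋯ r_{i_k} · e_i · r_{i_k} ⋯ r_{i₁} = e_j`. -/
theorem conjugate_e_eq_of_root_eq {I : Type} [Fintype I] (G : SimpleGraph I)
    (hpos : ∀ v : I → ℝ, v ≠ 0 → 0 < cartanForm G v v)
    (l : List I) (i j : I)
    (h : (l.map (simpleReflection G)).foldr (· ∘ ·) id (simpleRoot i) = simpleRoot j) :
    (l.map (R G)).prod * E G i * (l.reverse.map (R G)).prod = E G j := by
  have hmain := BrauerProof.main_lemma G hpos l.length l le_rfl (E G)
    (BrauerProof.goodFamily_E G) i j 1 (Or.inl rfl) (by rw [one_smul]; exact h)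
  exact hmain
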